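/- PMC \ PCS ≠ ∅; that is, there is an indexed family that is PMC-learnable but not PCS-learnable. -/

import Mathlib

/-!
Common framework: indexed families of c.e. sets, enumerations (texts),
learning machines with run-time, membership-oracle machines, teachers,
and the learning criteria PRT/PSD/PMC/PCS with oracle/teacher variants.
-/

namespace TeachLearn

attribute [local instance] Classical.propDecidable

/-- The initial segment (finite string) of length `n` of the infinite sequence `f`. -/
def str (f : ℕ → ℕ) (n : ℕ) : List ℕ := (List.range n).map f

/-- `f` is an enumeration (a text) of the set `A`: its set of values is exactly `A`. -/
def IsEnum (f : ℕ → ℕ) (A : Set ℕ) : Prop := Set.range f = A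

/-- An indexed family: a uniformly computably enumerable sequence of nonempty
subsets of `ℕ`. -/
structure IndexedFamily where
  F : ℕ → Set ℕ
  nonempty : ∀ n, (F n).Nonempty
  uce : REPred fun p : ℕ × ℕ => p.1 ∈ F p.2

namespace IndexedFamily

/-- `A` is a member of the indexed family `𝓕`. -/
def Mem (𝓕 : IndexedFamily) (A : Set ℕ) : Prop := ∃ n, 𝓕.F n = A

/-- The minimal index of `A` in the indexed family `𝓕`. -/
noncomputable def mi (𝓕 : IndexedFamily) (A : Set ℕ) : ℕ := sInf {n | 𝓕.F n = A}

end IndexedFamily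

/-- A learning machine: a partial computable map from finite strings to
hypotheses, together with a (cumulative) run-time function.  The run-time is
defined exactly when the machine halts, dominates the length of the input read
as well as the size of the output produced, and is monotone along prefixes
(time is accumulated while reading an enumeration). -/
structure Machine where
  eval : List ℕ →. ℕ
  partrec : Partrec eval
  time : List ℕ →. ℕ
  time_dom : ∀ σ, (time σ).Dom ↔ (eval σ).Dom
  length_le_time : ∀ ⦃σ t⦄, t ∈ time σ → σ.length ≤ t
  size_le_time : ∀ ⦃σ t h⦄, t ∈ time σ → h ∈ eval σ → Nat.size h ≤ t
  time_mono : ∀ ⦃σ τ s t⦄, σ <+: τ → s ∈ time σ → t ∈ time τ → s ≤ t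

/-- A teacher: a computable, prefix-monotone map on finite strings whose
output consists of elements of its input. -/
structure Teacher where
  t : List ℕ → List ℕ
  computable : Computable t
  mono : ∀ ⦃σ τ⦄, σ <+: τ → t σ <+: t τ
  content_sub : ∀ ⦃σ x⦄, x ∈ t σ → x ∈ σ

/-- A learning machine with access to a membership oracle, modeled
interactively: `step (σ, ans)` is the machine's action on input string `σ`
after having received the list `ans` of oracle answers so far; an even value
`2 * q` asks the oracle whether `q` belongs to the target, while an odd value
`2 * h + 1` halts the interaction with hypothesis `h`.  The run-time dominates
the length of the input read, the number of oracle queries asked, and the size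
of the value produced, and is monotone (cumulative). -/
structure OMachine where
  step : List ℕ × List Bool →. ℕ
  partrec : Partrec step
  time : List ℕ × List Bool →. ℕ
  time_dom : ∀ x, (time x).Dom ↔ (step x).Dom
  length_le_time : ∀ ⦃x t⦄, t ∈ time x → x.1.length ≤ t
  queries_le_time : ∀ ⦃x t⦄, t ∈ time x → x.2.length ≤ t
  size_le_time : ∀ ⦃x t v⦄, t ∈ time x → v ∈ step x → Nat.size v ≤ t
  time_mono : ∀ ⦃σ τ a b s t⦄, σ <+: τ → a <+: b →
    s ∈ time (σ, a) → t ∈ time (τ, b) → s ≤ t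

namespace OMachine

/-- The answer lists reachable in the interaction of the machine `M` with the
membership oracle for `A` on the input string `σ`. -/
inductive Reach (M : OMachine) (A : Set ℕ) (σ : List ℕ) : List Bool → Prop
  | nil : Reach M A σ []
  | query {ans q} : Reach M A σ ans → (2 * q) ∈ M.step (σ, ans) →
      Reach M A σ (ans ++ [decide (q ∈ A)])

/-- `M.Out A σ h ans`: on input `σ`, interacting with the membership oracle
for `A`, the machine `M` receives the oracle answers `ans` and halts with
hypothesis `h`. -/
def Out (M : OMachine) (A : Set ℕ) (σ : List ℕ) (h : ℕ) (ans : List Bool) : Prop :=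
  M.Reach A σ ans ∧ (2 * h + 1) ∈ M.step (σ, ans)

/-- With oracle `A`, on the stage inputs `I`, the machine `M` outputs the
hypothesis `h` from stage `n` onwards. -/
def Settles (M : OMachine) (A : Set ℕ) (I : ℕ → List ℕ) (h n : ℕ) : Prop :=
  ∀ m, n ≤ m → ∃ ans, M.Out A (I m) h ans

end OMachine

/-- A teacher for the teacher-and-oracle model: it additionally has access to
the oracle answers received so far by the learner. -/
structure OTeacher where
  t : List ℕ → List Bool → List ℕ
  computable : Computable₂ t
  mono : ∀ ⦃σ τ a b⦄, σ <+: τ → a <+: b → t σ a <+: t τ b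
  content_sub : ∀ ⦃σ a x⦄, x ∈ t σ a → x ∈ σ

/-- On the stage inputs `I`, the machine `M` outputs the hypothesis `h` from
stage `n` onwards. -/
def Machine.Settles (M : Machine) (I : ℕ → List ℕ) (h n : ℕ) : Prop :=
  ∀ m, n ≤ m → M.eval (I m) = Part.some h

/-- Settling for the teacher-and-oracle model: `hist m` records the oracle
answers the learner received at stage `m - 1`, which the teacher sees at
stage `m`.  From stage `n` on, the learner outputs `h`. -/
def OMachine.TOSettles (M : OMachine) (T : OTeacher) (A : Set ℕ) (f : ℕ → ℕ)
    (hist : ℕ → List Bool) (h n : ℕ) : Prop :=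
  ∀ m, n ≤ m → M.Out A (T.t (str f m) (hist m)) h (hist (m + 1))

/-! ### Polynomial run-time (PRT) -/

/-- `M` converges to the hypothesis `h` on the stage inputs `I` within fewer
than `B` computation steps. -/
def Machine.PRTIdentifies (M : Machine) (I : ℕ → List ℕ) (h B : ℕ) : Prop :=
  ∃ n, M.Settles I h n ∧ ∃ t, t ∈ M.time (I n) ∧ t < B

/-- Oracle version of `Machine.PRTIdentifies`; the run-time bound also bounds
the oracle use (by `queries_le_time`). -/
def OMachine.PRTIdentifies (M : OMachine) (A : Set ℕ) (I : ℕ → List ℕ) (h B : ℕ) : Prop :=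
  ∃ n, M.Settles A I h n ∧
    ∃ ans t, M.Out A (I n) h ans ∧ t ∈ M.time (I n, ans) ∧ t < B

/-- `M` PRT-learns `𝓕` with polynomial bound `p`. -/
def PRTLearnsWith (M : Machine) (p : Polynomial ℕ) (𝓕 : IndexedFamily) : Prop :=
  ∀ A, 𝓕.Mem A → ∀ f, IsEnum f A →
    ∃ h, 𝓕.F h = A ∧ M.PRTIdentifies (str f) h (p.eval (𝓕.mi A))

/-- `𝓕` is PRT-learnable. -/
def PRT (𝓕 : IndexedFamily) : Prop := ∃ M p, PRTLearnsWith M p 𝓕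

/-- The learner-teacher pair `(M, T)` PRT-learns `𝓕` with polynomial bound `p`. -/
def PRTTLearnsWith (M : Machine) (T : Teacher) (p : Polynomial ℕ) (𝓕 : IndexedFamily) : Prop :=
  ∀ A, 𝓕.Mem A → ∀ f, IsEnum f A →
    ∃ h, 𝓕.F h = A ∧ M.PRTIdentifies (fun m => T.t (str f m)) h (p.eval (𝓕.mi A))

/-- `𝓕` is PRT[T]-learnable. -/
def PRTT (𝓕 : IndexedFamily) : Prop := ∃ M T p, PRTTLearnsWith M T p 𝓕

/-- `𝓕` is PRT[O]-learnable. -/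
def PRTO (𝓕 : IndexedFamily) : Prop :=
  ∃ (M : OMachine) (p : Polynomial ℕ), ∀ A, 𝓕.Mem A → ∀ f, IsEnum f A →
    ∃ h, 𝓕.F h = A ∧ M.PRTIdentifies A (str f) h (p.eval (𝓕.mi A))

/-- `𝓕` is PRT[T,O]-learnable. -/
def PRTTO (𝓕 : IndexedFamily) : Prop :=
  ∃ (M : OMachine) (T : OTeacher) (p : Polynomial ℕ),
    ∀ A, 𝓕.Mem A → ∀ f, IsEnum f A →
      ∃ h, 𝓕.F h = A ∧ ∃ hist : ℕ → List Bool, hist 0 = [] ∧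
        ∃ n, M.TOSettles T A f hist h n ∧
          ∃ t, t ∈ M.time (T.t (str f n) (hist n), hist (n + 1)) ∧ t < p.eval (𝓕.mi A)

/-! ### Polynomial size dataset (PSD) -/

/-- `M` converges to `h` on an initial stage whose input contains fewer than
`B` distinct elements. -/
def Machine.PSDIdentifies (M : Machine) (I : ℕ → List ℕ) (h B : ℕ) : Prop :=
  ∃ n, M.Settles I h n ∧ (I n).toFinset.card < B

/-- Oracle version of `Machine.PSDIdentifies`; the oracle use is also bounded. -/
def OMachine.PSDIdentifies (M : OMachine) (A : Set ℕ) (I : ℕ → List ℕ) (h B : ℕ) : Prop :=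
  ∃ n, M.Settles A I h n ∧ (I n).toFinset.card < B ∧
    ∃ ans, M.Out A (I n) h ans ∧ ans.length ≤ B

/-- `𝓕` is PSD-learnable. -/
def PSD (𝓕 : IndexedFamily) : Prop :=
  ∃ (M : Machine) (p : Polynomial ℕ), ∀ A, 𝓕.Mem A → ∀ f, IsEnum f A →
    ∃ h, 𝓕.F h = A ∧ M.PSDIdentifies (str f) h (p.eval (𝓕.mi A))

/-- `𝓕` is PSD[T]-learnable. -/
def PSDT (𝓕 : IndexedFamily) : Prop :=
  ∃ (M : Machine) (T : Teacher) (p : Polynomial ℕ), ∀ A, 𝓕.Mem A → ∀ f, IsEnum f A →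
    ∃ h, 𝓕.F h = A ∧ M.PSDIdentifies (fun m => T.t (str f m)) h (p.eval (𝓕.mi A))

/-- `𝓕` is PSD[O]-learnable. -/
def PSDO (𝓕 : IndexedFamily) : Prop :=
  ∃ (M : OMachine) (p : Polynomial ℕ), ∀ A, 𝓕.Mem A → ∀ f, IsEnum f A →
    ∃ h, 𝓕.F h = A ∧ M.PSDIdentifies A (str f) h (p.eval (𝓕.mi A))

/-- `𝓕` is PSD[T,O]-learnable. -/
def PSDTO (𝓕 : IndexedFamily) : Prop :=
  ∃ (M : OMachine) (T : OTeacher) (p : Polynomial ℕ),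
    ∀ A, 𝓕.Mem A → ∀ f, IsEnum f A →
      ∃ h, 𝓕.F h = A ∧ ∃ hist : ℕ → List Bool, hist 0 = [] ∧
        ∃ n, M.TOSettles T A f hist h n ∧
          (T.t (str f n) (hist n)).toFinset.card < p.eval (𝓕.mi A) ∧
          (hist (n + 1)).length ≤ p.eval (𝓕.mi A)

/-! ### Polynomial mind-changes (PMC) -/

/-- The set of positions at which the hypothesis stream `g` changes its mind. -/
def MindChanges (g : ℕ → ℕ) : Set ℕ := {i | g i ≠ g (i + 1)}

/-- The hypothesis stream `g` changes its mind at most `B` times, and the only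
hypothesis appearing infinitely often in it is an index of `A` in `𝓕`. -/
def PMCCriterion (𝓕 : IndexedFamily) (A : Set ℕ) (g : ℕ → ℕ) (B : ℕ) : Prop :=
  (MindChanges g).Finite ∧ (MindChanges g).ncard ≤ B ∧
    ∀ h, {i | g i = h}.Infinite → 𝓕.F h = A

/-- `𝓕` is PMC-learnable. -/
def PMC (𝓕 : IndexedFamily) : Prop :=
  ∃ (M : Machine) (p : Polynomial ℕ), ∀ A, 𝓕.Mem A → ∀ f, IsEnum f A →
    ∃ g : ℕ → ℕ, (∀ m, M.eval (str f m) = Part.some (g m)) ∧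
      PMCCriterion 𝓕 A g (p.eval (𝓕.mi A))

/-- `𝓕` is PMC[T]-learnable. -/
def PMCT (𝓕 : IndexedFamily) : Prop :=
  ∃ (M : Machine) (T : Teacher) (p : Polynomial ℕ), ∀ A, 𝓕.Mem A → ∀ f, IsEnum f A →
    ∃ g : ℕ → ℕ, (∀ m, M.eval (T.t (str f m)) = Part.some (g m)) ∧
      PMCCriterion 𝓕 A g (p.eval (𝓕.mi A))

/-- `𝓕` is PMC[O]-learnable. -/
def PMCO (𝓕 : IndexedFamily) : Prop :=
  ∃ (M : OMachine) (p : Polynomial ℕ), ∀ A, 𝓕.Mem A → ∀ f, IsEnum f A →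
    ∃ g : ℕ → ℕ,
      (∀ m, ∃ ans, M.Out A (str f m) (g m) ans ∧ ans.length ≤ p.eval (𝓕.mi A)) ∧
      PMCCriterion 𝓕 A g (p.eval (𝓕.mi A))

/-- `𝓕` is PMC[T,O]-learnable. -/
def PMCTO (𝓕 : IndexedFamily) : Prop :=
  ∃ (M : OMachine) (T : OTeacher) (p : Polynomial ℕ),
    ∀ A, 𝓕.Mem A → ∀ f, IsEnum f A →
      ∃ hist : ℕ → List Bool, hist 0 = [] ∧
        ∃ g : ℕ → ℕ,
          (∀ m, M.Out A (T.t (str f m) (hist m)) (g m) (hist (m + 1)) ∧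
            (hist (m + 1)).length ≤ p.eval (𝓕.mi A)) ∧
          PMCCriterion 𝓕 A g (p.eval (𝓕.mi A))

/-! ### Polynomial size characteristic sample (PCS) -/

/-- `𝓕` is PCS-learnable: there are a machine, a polynomial bound and an
assignment of a characteristic sample to each member of `𝓕`. -/
def PCS (𝓕 : IndexedFamily) : Prop :=
  ∃ (M : Machine) (p : Polynomial ℕ) (S : Set ℕ → Finset ℕ),
    ∀ A, 𝓕.Mem A → ↑(S A) ⊆ A ∧ (S A).card < p.eval (𝓕.mi A) ∧
      ∃ e, 𝓕.F e = A ∧ ∀ f, IsEnum f A → ∀ n, (∀ x ∈ S A, x ∈ str f n) →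
        M.eval (str f n) = Part.some e

/-- `𝓕` is PCS[O]-learnable. -/
def PCSO (𝓕 : IndexedFamily) : Prop :=
  ∃ (M : OMachine) (p : Polynomial ℕ) (S : Set ℕ → Finset ℕ),
    ∀ A, 𝓕.Mem A → ↑(S A) ⊆ A ∧ (S A).card < p.eval (𝓕.mi A) ∧
      ∃ e, 𝓕.F e = A ∧ ∀ f, IsEnum f A → ∀ n, (∀ x ∈ S A, x ∈ str f n) →
        ∃ ans, M.Out A (str f n) e ans ∧ ans.length ≤ p.eval (𝓕.mi A)

/-- `𝓕` is PCS[T]-learnable: the characteristic sample must eventually appear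
in the teacher's output stream, after which the learner locks onto a correct
index. -/
def PCST (𝓕 : IndexedFamily) : Prop :=
  ∃ (M : Machine) (T : Teacher) (p : Polynomial ℕ) (S : Set ℕ → Finset ℕ),
    ∀ A, 𝓕.Mem A → ↑(S A) ⊆ A ∧ (S A).card < p.eval (𝓕.mi A) ∧
      ∃ e, 𝓕.F e = A ∧ ∀ f, IsEnum f A →
        (∃ n, ∀ x ∈ S A, x ∈ T.t (str f n)) ∧
        ∀ n, (∀ x ∈ S A, x ∈ T.t (str f n)) → M.eval (T.t (str f n)) = Part.some e

/-- `𝓕` is PCS[T,O]-learnable. -/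
def PCSTO (𝓕 : IndexedFamily) : Prop :=
  ∃ (M : OMachine) (T : OTeacher) (p : Polynomial ℕ) (S : Set ℕ → Finset ℕ),
    ∀ A, 𝓕.Mem A → ↑(S A) ⊆ A ∧ (S A).card < p.eval (𝓕.mi A) ∧
      ∃ e, 𝓕.F e = A ∧ ∀ f, IsEnum f A →
        ∃ hist : ℕ → List Bool, hist 0 = [] ∧
          (∃ n, ∀ x ∈ S A, x ∈ T.t (str f n) (hist n)) ∧
          ∀ n, (∀ x ∈ S A, x ∈ T.t (str f n) (hist n)) →
            M.Out A (T.t (str f n) (hist n)) e (hist (n + 1)) ∧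
            (hist (n + 1)).length ≤ p.eval (𝓕.mi A)

end TeachLearn

/-!
The family consists of the blocks `{⟨n, j⟩ | j ≤ 2 ^ n}` together with each block minus one of
its points. It is PMC-learnable with three mind changes: read `n` off the first datum, and guess
the block minus `⟨n, j⟩` while `⟨n, j⟩` is the only point of the block not yet seen, the whole
block otherwise. It is not PCS-learnable: the block has index `n * n + n`, so for large `n` a
sample of polynomial size misses some point of it, and the block minus that point has a sample
inside the block as well; a text prefix containing both samples starts texts of both sets, so the
learner gives the same answer on them.
-/

open Filter

namespace Polynomial

theorem monotone_eval_nat (p : ℕ[X]) : Monotone fun n : ℕ => p.eval n := fun a b h => by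
  simp only [eval_eq_sum_range]
  gcongr

theorem eval_le_eval_one_mul_pow (p : ℕ[X]) {n : ℕ} (hn : 1 ≤ n) :
    p.eval n ≤ p.eval 1 * n ^ p.natDegree := by
  simp only [eval_eq_sum_range, one_pow, mul_one, Finset.sum_mul]
  refine Finset.sum_le_sum fun i hi => ?_
  gcongr
  exact Nat.lt_succ_iff.mp (Finset.mem_range.mp hi)

theorem eventually_eval_le_two_pow (p : ℕ[X]) : ∀ᶠ n in atTop, p.eval n ≤ 2 ^ n := by
  have hlittle := (isLittleO_pow_const_const_pow_of_one_lt (R := ℝ) p.natDegree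
    one_lt_two).const_mul_left ((p.eval 1 : ℕ) : ℝ)
  filter_upwards [hlittle.bound one_pos, eventually_ge_atTop 1] with n hn h1
  refine (p.eval_le_eval_one_mul_pow h1).trans ?_
  rw [one_mul, Real.norm_of_nonneg (by positivity), Real.norm_of_nonneg (by positivity)] at hn
  exact_mod_cast hn

end Polynomial

namespace TeachLearn

open Polynomial

theorem mem_str {f : ℕ → ℕ} {x m : ℕ} : x ∈ str f m ↔ ∃ j < m, f j = x := by
  simp [str]

theorem str_prefix (f : ℕ → ℕ) {m m' : ℕ} (h : m ≤ m') : str f m <+: str f m' := by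
  rw [show str f m = (str f m').take m by simp [str, ← List.map_take, List.take_range, h]]
  exact List.take_prefix _ _

theorem headI_str (f : ℕ → ℕ) {m : ℕ} (hm : 0 < m) : (str f m).headI = f 0 := by
  obtain ⟨m, rfl⟩ := Nat.exists_eq_add_of_lt hm
  simp [str, List.range_succ_eq_map]

theorem str_length_eq_of_forall_getElem (f : ℕ → ℕ) (σ : List ℕ)
    (hf : ∀ j (hj : j < σ.length), f j = σ[j]) : str f σ.length = σ :=
  List.ext_getElem (by simp [str]) fun j _ hj => by simp [str, hf j hj]

namespace IsEnum

variable {f : ℕ → ℕ} {A : Set ℕ}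

theorem mem_of_mem_str (hf : IsEnum f A) {x m : ℕ} (hx : x ∈ str f m) : x ∈ A := by
  obtain ⟨j, -, rfl⟩ := mem_str.mp hx
  exact hf ▸ Set.mem_range_self j

theorem eventually_mem_str_iff (hf : IsEnum f A) (hA : A.Finite) :
    ∀ᶠ m in atTop, ∀ x, x ∈ str f m ↔ x ∈ A := by
  have hseen : ∀ᶠ m in atTop, ∀ x ∈ A, x ∈ str f m := by
    refine hA.eventually_all.mpr fun x hx => ?_
    obtain ⟨j, rfl⟩ : x ∈ Set.range f := hf ▸ hx
    filter_upwards [eventually_gt_atTop j] with m hm using mem_str.mpr ⟨j, hm, rfl⟩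
  filter_upwards [hseen] with m hm x using ⟨hf.mem_of_mem_str, hm x⟩

theorem exists_str_eq (hA : A.Nonempty) {σ : List ℕ} (hσ : ∀ x ∈ σ, x ∈ A) :
    ∃ f, IsEnum f A ∧ str f σ.length = σ := by
  obtain ⟨e, rfl⟩ := A.to_countable.exists_eq_range hA
  refine ⟨fun j => σ.getD j (e (j - σ.length)), ?_,
    str_length_eq_of_forall_getElem _ _ fun j hj => List.getD_eq_getElem _ _ hj⟩
  refine Set.Subset.antisymm ?_ ?_
  · rintro _ ⟨j, rfl⟩
    by_cases hj : j < σ.length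
    · simp only [List.getD_eq_getElem _ _ hj]
      exact hσ _ (List.getElem_mem hj)
    · simp only [List.getD_eq_default _ _ (not_lt.mp hj), Set.mem_range_self]
  · rintro _ ⟨k, rfl⟩
    refine ⟨σ.length + k, ?_⟩
    simp only [List.getD_eq_default _ _ (Nat.le_add_right _ _), Nat.add_sub_cancel_left]

end IsEnum

theorem finite_mindChanges_of_eventually_eq {g : ℕ → ℕ} {c : ℕ} (hg : ∀ᶠ m in atTop, g m = c) :
    (MindChanges g).Finite := by
  obtain ⟨N, hN⟩ := eventually_atTop.mp hg
  refine (Set.finite_Iio N).subset fun m hm => ?_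
  by_contra hmN
  exact hm ((hN m (not_lt.mp hmN)).trans (hN (m + 1) ((not_lt.mp hmN).trans m.le_succ)).symm)

theorem _root_.Antitone.finite_mindChanges_and_ncard_le {u : ℕ → ℕ} (hu : Antitone u) :
    (MindChanges u).Finite ∧ (MindChanges u).ncard ≤ u 0 := by
  have hdrop : ∀ m ∈ MindChanges u, u (m + 1) < u m := fun m hm => (hu m.le_succ).lt_of_ne' hm
  have hmaps : Set.MapsTo (fun m => u (m + 1)) (MindChanges u) (Set.Iio (u 0)) :=
    fun m hm => (hdrop m hm).trans_le (hu m.zero_le)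
  have hinj : Set.InjOn (fun m => u (m + 1)) (MindChanges u) :=
    StrictAntiOn.injOn fun a _ b hb hab => (hdrop b hb).trans_le (hu hab)
  refine ⟨.of_injOn hmaps hinj (Set.finite_Iio _), ?_⟩
  calc (MindChanges u).ncard ≤ (Set.Iio (u 0)).ncard :=
        Set.ncard_le_ncard_of_injOn _ hmaps hinj (Set.finite_Iio _)
    _ = u 0 := by rw [← Finset.coe_Iio, Set.ncard_coe_finset, Nat.card_Iio]

theorem pmcCriterion_of_eventually_eq {𝓕 : IndexedFamily} {A : Set ℕ} {g : ℕ → ℕ} {B c : ℕ}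
    (hg : ∀ᶠ m in atTop, g m = c) (hc : 𝓕.F c = A) (hB : (MindChanges g).ncard ≤ B) :
    PMCCriterion 𝓕 A g B := by
  refine ⟨finite_mindChanges_of_eventually_eq hg, hB, fun h hh => ?_⟩
  obtain ⟨m, hmh, hmc⟩ := ((Nat.frequently_atTop_iff_infinite.mpr hh).and_eventually hg).exists
  exact hmh ▸ hmc ▸ hc

def cumulativeTime (g : List ℕ → ℕ) (σ : List ℕ) : ℕ :=
  σ.length + ∑ k ∈ Finset.range (σ.length + 1), Nat.size (g (σ.take k))

theorem cumulativeTime_mono (g : List ℕ → ℕ) {σ τ : List ℕ} (h : σ <+: τ) :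
    cumulativeTime g σ ≤ cumulativeTime g τ := by
  have htake : ∀ k ∈ Finset.range (σ.length + 1), τ.take k = σ.take k := fun k hk => by
    obtain ⟨r, rfl⟩ := h
    exact List.take_append_of_le_length (Nat.lt_succ_iff.mp (Finset.mem_range.mp hk))
  unfold cumulativeTime
  have hlen : σ.length ≤ τ.length := h.length_le
  rw [← Finset.sum_congr rfl fun k hk => congrArg (fun l => Nat.size (g l)) (htake k hk)]
  gcongr

def Machine.ofComputable (g : List ℕ → ℕ) (hg : Computable g) : Machine where
  eval σ := Part.some (g σ)
  partrec := hg
  time σ := Part.some (cumulativeTime g σ)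
  time_dom _ := by simp
  length_le_time σ t ht := by
    rw [Part.mem_some_iff.mp ht]
    exact Nat.le_add_right _ _
  size_le_time σ t h ht hh := by
    rw [Part.mem_some_iff.mp ht, Part.mem_some_iff.mp hh]
    refine le_add_left ?_
    simpa using Finset.single_le_sum (f := fun k => Nat.size (g (σ.take k)))
      (fun _ _ => Nat.zero_le _) (Finset.self_mem_range_succ σ.length)
  time_mono σ τ s t h hs ht := by
    rw [Part.mem_some_iff.mp hs, Part.mem_some_iff.mp ht]
    exact cumulativeTime_mono g h

/-- `blockSet n 0 = {⟨n, j⟩ | j ≤ 2 ^ n}` is the `n`-th block, and `blockSet n (j + 1)` is the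
block with `⟨n, j⟩` removed (or the whole block when `2 ^ n < j`). -/
def blockSet (n i : ℕ) : Set ℕ := {x | x.unpair.1 = n ∧ x.unpair.2 ≤ 2 ^ n ∧ x.unpair.2 + 1 ≠ i}

theorem pair_mem_blockSet {m j n i : ℕ} :
    Nat.pair m j ∈ blockSet n i ↔ m = n ∧ j ≤ 2 ^ n ∧ j + 1 ≠ i := by
  simp [blockSet]

theorem blockSet_nonempty (n i : ℕ) : (blockSet n i).Nonempty := by
  by_cases hi : i = 1
  · exact ⟨Nat.pair n 1, pair_mem_blockSet.mpr ⟨rfl, Nat.one_le_two_pow, by omega⟩⟩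
  · exact ⟨Nat.pair n 0, pair_mem_blockSet.mpr ⟨rfl, Nat.zero_le _, by omega⟩⟩

theorem blockSet_finite (n i : ℕ) : (blockSet n i).Finite :=
  ((Set.finite_Iic (2 ^ n)).image (Nat.pair n)).subset fun x hx =>
    ⟨x.unpair.2, hx.2.1, by rw [← hx.1, Nat.pair_unpair]⟩

theorem blockSet_subset_blockSet_zero (n i : ℕ) : blockSet n i ⊆ blockSet n 0 :=
  fun _ hx => ⟨hx.1, hx.2.1, Nat.succ_ne_zero _⟩

theorem primrec_two_pow : Primrec fun n : ℕ => 2 ^ n :=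
  (Primrec₂.unpaired'.mp Nat.Primrec.pow).comp (Primrec.const 2) Primrec.id

theorem primrecPred_mem_blockSet :
    PrimrecPred fun p : ℕ × ℕ => p.1 ∈ blockSet p.2.unpair.1 p.2.unpair.2 := by
  open Primrec in
  have x₁ : Primrec fun p : ℕ × ℕ => p.1.unpair.1 := fst.comp (unpair.comp fst)
  have x₂ : Primrec fun p : ℕ × ℕ => p.1.unpair.2 := snd.comp (unpair.comp fst)
  have n : Primrec fun p : ℕ × ℕ => p.2.unpair.1 := fst.comp (unpair.comp snd)
  have i : Primrec fun p : ℕ × ℕ => p.2.unpair.2 := snd.comp (unpair.comp snd)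
  exact (Primrec.eq.comp x₁ n).and ((Primrec.nat_le.comp x₂ (primrec_two_pow.comp n)).and
    (Primrec.eq.comp (Primrec.succ.comp x₂) i).not)

def blockFamily : IndexedFamily where
  F k := blockSet k.unpair.1 k.unpair.2
  nonempty _ := blockSet_nonempty _ _
  uce := primrecPred_mem_blockSet.computablePred.to_re

theorem blockFamily_F_pair (n i : ℕ) : blockFamily.F (Nat.pair n i) = blockSet n i := by
  simp [blockFamily]

def missing (n : ℕ) (σ : List ℕ) : List ℕ :=
  (List.range (2 ^ n + 1)).filter fun j => Nat.pair n j ∉ σ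

def missingCode (l : List ℕ) : ℕ := if l.length = 1 then l.headI + 1 else 0

def blockLearner (σ : List ℕ) : ℕ :=
  Nat.pair σ.headI.unpair.1 (missingCode (missing σ.headI.unpair.1 σ))

theorem mem_missing {n j : ℕ} {σ : List ℕ} : j ∈ missing n σ ↔ j ≤ 2 ^ n ∧ Nat.pair n j ∉ σ := by
  simp [missing]

theorem nodup_missing (n : ℕ) (σ : List ℕ) : (missing n σ).Nodup :=
  List.nodup_range.filter _

theorem missing_sublist_of_prefix (n : ℕ) {σ τ : List ℕ} (h : σ <+: τ) :
    (missing n τ).Sublist (missing n σ) :=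
  List.monotone_filter_right _ fun j hj => by
    simp only [decide_not, Bool.not_eq_true', decide_eq_false_iff_not] at hj ⊢
    exact fun hσ => hj (h.subset hσ)

theorem missingCode_eq_of_sublist {l l' : List ℕ} (h : l'.Sublist l)
    (hlen : min l'.length 2 = min l.length 2) : missingCode l' = missingCode l := by
  by_cases heq : l'.length = l.length
  · rw [h.eq_of_length heq]
  · have h₁ : l'.length ≠ 1 := by omega
    have h₂ : l.length ≠ 1 := by have := h.length_le; omega
    simp [missingCode, h₁, h₂]

theorem blockSet_missingCode {n i : ℕ} {l : List ℕ} (hl : l.Nodup)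
    (hmem : ∀ j, j ∈ l ↔ j ≤ 2 ^ n ∧ j + 1 = i) : blockSet n (missingCode l) = blockSet n i := by
  by_cases hone : l.length = 1
  · obtain ⟨a, rfl⟩ := List.length_eq_one_iff.mp hone
    simp [missingCode, ((hmem a).mp (List.mem_singleton_self a)).2]
  · have hi : ∀ j ≤ 2 ^ n, j + 1 ≠ i := fun j hj hji => hone <| by
      have : l.Perm [j] := (List.perm_ext_iff_of_nodup hl (List.nodup_singleton j)).mpr fun a => by
        rw [hmem, List.mem_singleton]
        omega
      simpa using this.length_eq
    ext x
    simp only [blockSet, missingCode, if_neg hone, Set.mem_ofPred_eq]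
    constructor
    · rintro ⟨h₁, h₂, -⟩
      exact ⟨h₁, h₂, hi _ h₂⟩
    · rintro ⟨h₁, h₂, -⟩
      exact ⟨h₁, h₂, Nat.succ_ne_zero _⟩

theorem primrec_blockLearner : Primrec blockLearner := by
  have hn : Primrec fun σ : List ℕ => σ.headI.unpair.1 :=
    Primrec.fst.comp (Primrec.unpair.comp Primrec.list_headI)
  have hmem : PrimrecRel fun (σ : List ℕ) (x : ℕ) => x ∈ σ :=
    (PrimrecRel.exists_mem_list Primrec.eq).of_eq fun σ x => by simp
  have hmissing : Primrec fun σ : List ℕ => missing σ.headI.unpair.1 σ := by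
    have hnot : PrimrecRel fun (j : ℕ) (σ : List ℕ) => Nat.pair σ.headI.unpair.1 j ∉ σ :=
      (hmem.comp Primrec.snd (Primrec₂.natPair.comp (hn.comp Primrec.snd) Primrec.fst)).not
    exact (hnot.listFilter.comp (Primrec.list_range.comp (Primrec.succ.comp
      (primrec_two_pow.comp hn))) Primrec.id).of_eq fun σ => rfl
  have hcode : Primrec missingCode :=
    Primrec.ite (Primrec.eq.comp Primrec.list_length (Primrec.const 1))
      (Primrec.succ.comp Primrec.list_headI) (Primrec.const 0)
  exact Primrec₂.natPair.comp hn (hcode.comp hmissing)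

section BlockLearner

variable {f : ℕ → ℕ} {n i : ℕ}

theorem blockLearner_str (hf : IsEnum f (blockSet n i)) {m : ℕ} (hm : 0 < m) :
    blockLearner (str f m) = Nat.pair n (missingCode (missing n (str f m))) := by
  have hf₀ : (f 0).unpair.1 = n := (hf ▸ Set.mem_range_self 0 : f 0 ∈ blockSet n i).1
  rw [blockLearner, headI_str f hm, hf₀]

/-- Past the first datum the guess only moves when `min (missing n σ).length 2` drops, which
happens at most twice. -/
theorem ncard_mindChanges_blockLearner_le (hf : IsEnum f (blockSet n i)) :
    (MindChanges fun m => blockLearner (str f m)).ncard ≤ 3 := by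
  set u : ℕ → ℕ := fun m => min (missing n (str f m)).length 2
  have hsub : ∀ m, (missing n (str f (m + 1))).Sublist (missing n (str f m)) := fun m =>
    missing_sublist_of_prefix n (str_prefix f m.le_succ)
  have hu : Antitone u := antitone_nat_of_succ_le fun m => min_le_min_right 2 (hsub m).length_le
  obtain ⟨hfin, hcard⟩ := hu.finite_mindChanges_and_ncard_le
  have hchanges : MindChanges (fun m => blockLearner (str f m)) ⊆ insert 0 (MindChanges u) := by
    intro m hm
    refine (Set.mem_insert_iff).mpr (or_iff_not_imp_right.mpr fun hum => ?_)
    by_contra hm₀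
    apply hm
    simp only [blockLearner_str hf (Nat.pos_of_ne_zero hm₀), blockLearner_str hf m.succ_pos,
      missingCode_eq_of_sublist (hsub m) (not_not.mp hum).symm]
  calc _ ≤ (insert 0 (MindChanges u)).ncard := Set.ncard_le_ncard hchanges (hfin.insert 0)
    _ ≤ (MindChanges u).ncard + 1 := Set.ncard_insert_le _ _
    _ ≤ 3 := by have : u 0 ≤ 2 := min_le_right _ _; omega

theorem exists_eventually_blockLearner_eq (hf : IsEnum f (blockSet n i)) :
    ∃ c, blockFamily.F c = blockSet n i ∧ ∀ᶠ m in atTop, blockLearner (str f m) = c := by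
  obtain ⟨N, hN⟩ := eventually_atTop.mp
    ((hf.eventually_mem_str_iff (blockSet_finite n i)).and (eventually_gt_atTop 0))
  refine ⟨Nat.pair n (missingCode (missing n (str f N))), ?_,
    eventually_atTop.mpr ⟨N, fun m hm => ?_⟩⟩
  · rw [blockFamily_F_pair]
    refine blockSet_missingCode (nodup_missing _ _) fun j => ?_
    rw [mem_missing, (hN N le_rfl).1, pair_mem_blockSet]
    omega
  · rw [blockLearner_str hf (hN m hm).2]
    congr 2
    exact List.filter_congr fun j _ =>
      decide_eq_decide.mpr (not_congr (((hN m hm).1 _).trans ((hN N le_rfl).1 _).symm))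

end BlockLearner

theorem pmc_blockFamily : PMC blockFamily := by
  refine ⟨.ofComputable blockLearner primrec_blockLearner.to_comp, C 3, ?_⟩
  rintro A ⟨k, rfl⟩ f hf
  obtain ⟨n, i, rfl⟩ : ∃ n i, k = Nat.pair n i := ⟨_, _, (Nat.pair_unpair k).symm⟩
  rw [blockFamily_F_pair] at hf ⊢
  obtain ⟨c, hc, hlim⟩ := exists_eventually_blockLearner_eq hf
  exact ⟨_, fun m => rfl,
    pmcCriterion_of_eventually_eq hlim hc (by simpa using ncard_mindChanges_blockLearner_le hf)⟩

theorem eq_of_samples_subset_inter {M : Machine} {A B : Set ℕ} {SA SB : Finset ℕ} {a b : ℕ}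
    (hA : A.Nonempty) (hB : B.Nonempty) (hSA : ↑SA ⊆ A ∩ B) (hSB : ↑SB ⊆ A ∩ B)
    (hlockA : ∀ f, IsEnum f A → ∀ n, (∀ x ∈ SA, x ∈ str f n) → M.eval (str f n) = Part.some a)
    (hlockB : ∀ f, IsEnum f B → ∀ n, (∀ x ∈ SB, x ∈ str f n) → M.eval (str f n) = Part.some b) :
    a = b := by
  set σ := SA.toList ++ SB.toList
  have hσ : ∀ x ∈ σ, x ∈ A ∩ B := fun x hx => by
    rcases List.mem_append.mp hx with hx | hx
    · exact hSA (Finset.mem_toList.mp hx)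
    · exact hSB (Finset.mem_toList.mp hx)
  obtain ⟨fA, hfA, hσA⟩ := IsEnum.exists_str_eq hA fun x hx => (hσ x hx).1
  obtain ⟨fB, hfB, hσB⟩ := IsEnum.exists_str_eq hB fun x hx => (hσ x hx).2
  have ha := hlockA fA hfA σ.length fun x hx => by
    rw [hσA]
    exact List.mem_append_left _ (Finset.mem_toList.mpr hx)
  have hb := hlockB fB hfB σ.length fun x hx => by
    rw [hσB]
    exact List.mem_append_right _ (Finset.mem_toList.mpr hx)
  rw [hσA] at ha
  rw [hσB] at hb
  exact Part.some_injective (ha.symm.trans hb)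

theorem exists_pair_notMem_of_card_lt (n : ℕ) {s : Finset ℕ} (hs : s.card < 2 ^ n + 1) :
    ∃ j ≤ 2 ^ n, Nat.pair n j ∉ s := by
  have hinj : Set.InjOn (Nat.pair n) ↑(Finset.range (2 ^ n + 1)) := fun a _ b _ h =>
    (Nat.pair_eq_pair.mp h).2
  obtain ⟨_, hx, hxs⟩ := Finset.exists_mem_notMem_of_card_lt_card
    (hs.trans_eq (by rw [Finset.card_image_of_injOn hinj, Finset.card_range]))
  obtain ⟨j, hj, rfl⟩ := Finset.mem_image.mp hx
  exact ⟨j, Nat.lt_succ_iff.mp (Finset.mem_range.mp hj), hxs⟩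

theorem not_pcs_blockFamily : ¬ PCS blockFamily := by
  rintro ⟨M, p, S, hS⟩
  obtain ⟨n, hn⟩ := (p.comp (X * X + X)).eventually_eval_le_two_pow.exists
  set A := blockSet n 0
  obtain ⟨hSA, hcardA, a, ha, hlockA⟩ := hS A ⟨_, blockFamily_F_pair n 0⟩
  have hmi : blockFamily.mi A ≤ n * n + n :=
    (Nat.sInf_le (blockFamily_F_pair n 0)).trans_eq (by simp [Nat.pair])
  have hcard : (S A).card < 2 ^ n + 1 := by
    have : p.eval _ ≤ p.eval _ := p.monotone_eval_nat hmi
    simp only [eval_comp, eval_add, eval_mul, eval_X] at hn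
    omega
  obtain ⟨j, hj, hjS⟩ := exists_pair_notMem_of_card_lt n hcard
  set B := blockSet n (j + 1)
  obtain ⟨hSB, -, b, hb, hlockB⟩ := hS B ⟨_, blockFamily_F_pair n (j + 1)⟩
  have hSAB : ↑(S A) ⊆ A ∩ B := fun x hx => by
    refine ⟨hSA hx, (hSA hx).1, (hSA hx).2.1, fun hxj => hjS ?_⟩
    rwa [← (hSA hx).1, ← Nat.succ_injective hxj, Nat.pair_unpair]
  have hSBA : ↑(S B) ⊆ A ∩ B := fun x hx => ⟨blockSet_subset_blockSet_zero n _ (hSB hx), hSB hx⟩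
  have hAB : A = B := by
    rw [← ha, ← hb, eq_of_samples_subset_inter (blockSet_nonempty n 0) (blockSet_nonempty n _)
      hSAB hSBA hlockA hlockB]
  have hjA : Nat.pair n j ∈ A := pair_mem_blockSet.mpr ⟨rfl, hj, Nat.succ_ne_zero _⟩
  exact (pair_mem_blockSet.mp (hAB ▸ hjA)).2.2 rfl

/-- `PMC \ PCS ≠ ∅`. -/
theorem stmt18 : ∃ 𝓕 : IndexedFamily, PMC 𝓕 ∧ ¬ PCS 𝓕 :=
  ⟨blockFamily, pmc_blockFamily, not_pcs_blockFamily⟩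

end TeachLearn
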